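/- Suppose the sequence (v^n)_{n≥0} solves the discrete wave scheme with source (r^n)_{n≥1}. Then for every n ≥ 1 the telescoped discrete energy identity holds: E^{n+1/2}(v) = E^{1/2}(v) + τ · Σ_{k=1}^{n} ⟨r^k, (v^{k+1} − v^{k−1})/(2τ)⟩. -/

import Mathlib

/- Testing the scheme at step `k` with `w = v^{k+1} - v^{k-1}` turns the `b`-term into a difference of
squared norms (`⟪x - y, x + y⟫ = ‖x‖² - ‖y‖²`) and, by symmetry, the `a`-term into a difference of
`a(v^{k+1}, v^k)`. Since the energy equals `‖π(v^{n+1} - v^n)‖² / (2τ²) + a(v^{n+1}, v^n) / 2`, each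
step changes it by exactly `τ ⟨r^k, (v^{k+1} - v^{k-1}) / (2τ)⟩`, and the identity telescopes. -/

open RealInnerProductSpace

/-- The discrete energy `E^{n+1/2}(v)` of the leapfrog scheme. -/
noncomputable def discE {H : Type*} [NormedAddCommGroup H] [InnerProductSpace ℝ H]
    (W : Submodule ℝ H) [Submodule.HasOrthogonalProjection W]
    (a : H →ₗ[ℝ] H →ₗ[ℝ] ℝ) (τ : ℝ) (v : ℕ → H) (n : ℕ) : ℝ :=
  (1 / 2) * ‖(Submodule.orthogonalProjectionOnto W (τ⁻¹ • (v (n + 1) - v n)) : H)‖ ^ 2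
    - (τ ^ 2 / 8) * a (τ⁻¹ • (v (n + 1) - v n)) (τ⁻¹ • (v (n + 1) - v n))
    + (1 / 2) * a ((2 : ℝ)⁻¹ • (v (n + 1) + v n)) ((2 : ℝ)⁻¹ • (v (n + 1) + v n))

lemma real_inner_sub_add_eq_norm_sq_sub_norm_sq {F : Type*} [NormedAddCommGroup F]
    [InnerProductSpace ℝ F] (x y : F) : ⟪x - y, x + y⟫ = ‖x‖ ^ 2 - ‖y‖ ^ 2 := by
  rw [inner_sub_left, inner_add_right, inner_add_right, real_inner_comm y x,
    real_inner_self_eq_norm_sq, real_inner_self_eq_norm_sq]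
  ring

lemma LinearMap.half_add_apply_half_add_sub {M : Type*} [AddCommGroup M] [Module ℝ M]
    (a : M →ₗ[ℝ] M →ₗ[ℝ] ℝ) (hsymm : ∀ u w : M, a u w = a w u) (x y : M) :
    a ((2 : ℝ)⁻¹ • (x + y)) ((2 : ℝ)⁻¹ • (x + y)) - (1 / 4) * a (x - y) (x - y) = a x y := by
  simp only [map_smul, LinearMap.smul_apply, map_add, LinearMap.add_apply, map_sub,
    LinearMap.sub_apply, smul_eq_mul, hsymm y x]
  ring

section Energy

variable {H : Type*} [NormedAddCommGroup H] [InnerProductSpace ℝ H]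
  (W : Submodule ℝ H) [Submodule.HasOrthogonalProjection W]
  (a : H →ₗ[ℝ] H →ₗ[ℝ] ℝ) (τ : ℝ) (v : ℕ → H)

local notation "π" x:max => (Submodule.orthogonalProjectionOnto W x : H)

lemma discE_eq_norm_sq_add (hsymm : ∀ u w : H, a u w = a w u) (hτ : τ ≠ 0) (n : ℕ) :
    discE W a τ v n = (2 * τ ^ 2)⁻¹ * ‖π (v (n + 1) - v n)‖ ^ 2 + (1 / 2) * a (v (n + 1)) (v n) := by
  have hkin : ‖π (τ⁻¹ • (v (n + 1) - v n))‖ ^ 2 = (τ ^ 2)⁻¹ * ‖π (v (n + 1) - v n)‖ ^ 2 := by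
    simp only [map_smul, Submodule.coe_smul, norm_smul, Real.norm_eq_abs, mul_pow, sq_abs, inv_pow]
  have hpot := LinearMap.half_add_apply_half_add_sub a hsymm (v (n + 1)) (v n)
  rw [discE, hkin, ← hpot]
  simp only [map_smul, LinearMap.smul_apply, smul_eq_mul]
  field_simp
  ring

lemma discE_succ (hsymm : ∀ u w : H, a u w = a w u) (hτ : τ ≠ 0) (r : H) (m : ℕ)
    (hstep : ⟪π ((τ ^ 2)⁻¹ • (v (m + 2) - 2 • v (m + 1) + v m)), π (v (m + 2) - v m)⟫
      + a (v (m + 1)) (v (m + 2) - v m) = ⟪r, v (m + 2) - v m⟫) :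
    discE W a τ v (m + 1) = discE W a τ v m + τ * ⟪r, (2 * τ)⁻¹ • (v (m + 2) - v m)⟫ := by
  have hkin : ⟪π ((τ ^ 2)⁻¹ • (v (m + 2) - 2 • v (m + 1) + v m)), π (v (m + 2) - v m)⟫
      = (τ ^ 2)⁻¹ * (‖π (v (m + 2) - v (m + 1))‖ ^ 2 - ‖π (v (m + 1) - v m)‖ ^ 2) := by
    have hsecond : v (m + 2) - 2 • v (m + 1) + v m = (v (m + 2) - v (m + 1)) - (v (m + 1) - v m) := by
      rw [two_smul]; abel
    have hcentral : v (m + 2) - v m = (v (m + 2) - v (m + 1)) + (v (m + 1) - v m) := by abel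
    rw [hsecond, hcentral, map_smul, Submodule.coe_smul, real_inner_smul_left, map_sub, map_add,
      Submodule.coe_sub, Submodule.coe_add, real_inner_sub_add_eq_norm_sq_sub_norm_sq]
  have hpot : a (v (m + 1)) (v (m + 2) - v m) = a (v (m + 2)) (v (m + 1)) - a (v (m + 1)) (v m) := by
    rw [map_sub, hsymm (v (m + 1))]
  rw [hkin, hpot] at hstep
  rw [discE_eq_norm_sq_add W a τ v hsymm hτ, discE_eq_norm_sq_add W a τ v hsymm hτ,
    real_inner_smul_right, ← hstep]
  field_simp
  ring

end Energy

lemma Finset.eq_add_sum_Icc_of_succ {M : Type*} [AddCommMonoid M] {f g : ℕ → M}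
    (h : ∀ m, f (m + 1) = f m + g (m + 1)) (n : ℕ) : f n = f 0 + ∑ k ∈ Finset.Icc 1 n, g k := by
  induction n with
  | zero => simp
  | succ n ih => rw [Finset.sum_Icc_succ_top (Nat.le_add_left 1 n), h, ih, add_assoc]

theorem telescoped_energy_identity_general
    {H : Type*} [NormedAddCommGroup H] [InnerProductSpace ℝ H]
    (W V : Submodule ℝ H) [Submodule.HasOrthogonalProjection W]
    (a : H →ₗ[ℝ] H →ₗ[ℝ] ℝ) (hsymm : ∀ u w : H, a u w = a w u)
    (τ : ℝ) (hτ : 0 < τ)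
    (v r : ℕ → H) (hvV : ∀ n, v n ∈ V)
    (hscheme : ∀ n, 1 ≤ n → ∀ w ∈ V,
      ⟪(Submodule.orthogonalProjectionOnto W ((τ ^ 2)⁻¹ • (v (n + 1) - 2 • v n + v (n - 1))) : H),
        (Submodule.orthogonalProjectionOnto W w : H)⟫ + a (v n) w = ⟪r n, w⟫)
    (n : ℕ) :
    discE W a τ v n
      = discE W a τ v 0
        + τ * ∑ k ∈ Finset.Icc 1 n, ⟪r k, (2 * τ)⁻¹ • (v (k + 1) - v (k - 1))⟫ := by
  rw [Finset.mul_sum]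
  refine Finset.eq_add_sum_Icc_of_succ (fun m => ?_) n
  exact discE_succ W a τ v hsymm hτ.ne' (r (m + 1)) m
    (hscheme (m + 1) (Nat.le_add_left 1 m) _ (V.sub_mem (hvV _) (hvV _)))

/-- Telescoped discrete energy identity:
`E^{n+1/2}(v) = E^{1/2}(v) + τ Σ_{k=1}^n ⟨r^k, (v^{k+1} − v^{k−1})/(2τ)⟩`. -/
theorem telescoped_energy_identity
    {H : Type*} [NormedAddCommGroup H] [InnerProductSpace ℝ H]
    (W V : Submodule ℝ H) [Submodule.HasOrthogonalProjection W]
    (a : H →ₗ[ℝ] H →ₗ[ℝ] ℝ) (hsymm : ∀ u w : H, a u w = a w u)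
    (τ : ℝ) (hτ : 0 < τ)
    (v r : ℕ → H) (hvV : ∀ n, v n ∈ V)
    (hscheme : ∀ n, 1 ≤ n → ∀ w ∈ V,
      ⟪(Submodule.orthogonalProjectionOnto W ((τ ^ 2)⁻¹ • (v (n + 1) - 2 • v n + v (n - 1))) : H),
        (Submodule.orthogonalProjectionOnto W w : H)⟫ + a (v n) w = ⟪r n, w⟫)
    (n : ℕ) (hn : 1 ≤ n) :
    discE W a τ v n
      = discE W a τ v 0
        + τ * ∑ k ∈ Finset.Icc 1 n, ⟪r k, (2 * τ)⁻¹ • (v (k + 1) - v (k - 1))⟫ :=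
  telescoped_energy_identity_general W V a hsymm τ hτ v r hvV hscheme n
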